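/- arXiv:2601.18738 — 2 statements merged into one kernel-verified Lean document; each statement's English description precedes it below -/
import Mathlib

section
/- Let $2 \leq s \leq t$ be integers, $\eta \in (0,1)$, $N \geq 1$, and let $A \subseteq \{1,\dots,N\}$ satisfy: the number of tuples $(a_1,\dots,a_s,a_1',\dots,a_s') \in A^{2s}$ with $a_1 - a_1' = \cdots = a_s - a_s'$ is at most $(t + \eta)|A|^s$. Then $|A| \leq 2 (t^2/(1-\eta))^{1/s} N^{1 - 1/s}$. -/
open Finset

private def pat (s : ℕ) [NeZero s] (a : Fin s → ℤ) : Fin s → ℤ := fun i => a i - a 0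

private def Qc (s : ℕ) (A : Finset ℤ) (d : Fin s → ℤ) : ℕ :=
  (A.filter fun x => ∀ i, x + d i ∈ A).card

private lemma fiber_card (s : ℕ) [NeZero s] (A : Finset ℤ) (d : Fin s → ℤ) (hd : d 0 = 0) :
    (((Fintype.piFinset fun _ : Fin s => A)).filter (fun a => pat s a = d)).card = Qc s A d := by
  apply Finset.card_bij (fun a _ => a 0)
  · intro a ha
    rw [mem_filter] at ha
    obtain ⟨ha1, ha2⟩ := ha
    rw [Fintype.mem_piFinset] at ha1
    rw [mem_filter]
    refine ⟨ha1 0, fun i => ?_⟩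
    have : d i = a i - a 0 := by rw [← ha2]; rfl
    rw [this]; simpa using ha1 i
  · intro a ha b hb hab
    rw [mem_filter] at ha hb
    funext i
    have h1 : a i - a 0 = d i := congrFun ha.2 i
    have h2 : b i - b 0 = d i := congrFun hb.2 i
    omega
  · intro x hx
    rw [mem_filter] at hx
    refine ⟨fun i => x + d i, ?_, by simp [hd]⟩
    rw [mem_filter, Fintype.mem_piFinset]
    refine ⟨fun i => hx.2 i, ?_⟩
    funext i
    simp [pat, hd]

private lemma filter_count (s : ℕ) [NeZero s] (A : Finset ℤ) (P : (Fin s → ℤ) → Prop)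
    [DecidablePred P] :
    (((Fintype.piFinset fun _ : Fin s => A)).filter (fun a => P (pat s a))).card
      = ∑ d ∈ (((Fintype.piFinset fun _ : Fin s => A)).image (pat s)).filter P, Qc s A d := by
  rw [Finset.card_eq_sum_card_fiberwise (f := pat s)
      (t := (((Fintype.piFinset fun _ : Fin s => A)).image (pat s)).filter P)]
  · apply Finset.sum_congr rfl
    intro d hd
    rw [mem_filter] at hd
    obtain ⟨hd1, hd2⟩ := hd
    rw [← fiber_card s A d]
    · congr 1
      ext a
      simp only [mem_filter]
      constructor
      · rintro ⟨⟨h1, _⟩, h3⟩; exact ⟨h1, h3⟩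
      · rintro ⟨h1, h3⟩; exact ⟨⟨h1, h3 ▸ hd2⟩, h3⟩
    · rw [mem_image] at hd1
      obtain ⟨a, _, rfl⟩ := hd1
      simp [pat]
  · intro a ha
    rw [mem_coe, mem_filter] at ha
    rw [mem_coe, mem_filter, mem_image]
    exact ⟨⟨a, ha.1, rfl⟩, ha.2⟩

private lemma energy_count (s : ℕ) [NeZero s] (A : Finset ℤ) :
    (((Fintype.piFinset fun _ : Fin s => A) ×ˢ (Fintype.piFinset fun _ : Fin s => A)).filter
        (fun p => pat s p.1 = pat s p.2)).card
      = ∑ d ∈ ((Fintype.piFinset fun _ : Fin s => A)).image (pat s), (Qc s A d) ^ 2 := by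
  rw [Finset.card_eq_sum_card_fiberwise (f := fun p => pat s p.1)
      (t := ((Fintype.piFinset fun _ : Fin s => A)).image (pat s))]
  · apply Finset.sum_congr rfl
    intro d hd
    have hd0 : d 0 = 0 := by
      rw [mem_image] at hd
      obtain ⟨a, _, rfl⟩ := hd
      simp [pat]
    have : ((((Fintype.piFinset fun _ : Fin s => A) ×ˢ (Fintype.piFinset fun _ : Fin s => A)).filter
        (fun p => pat s p.1 = pat s p.2)).filter (fun p => pat s p.1 = d))
        = ((Fintype.piFinset fun _ : Fin s => A).filter (fun a => pat s a = d)) ×ˢ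
          ((Fintype.piFinset fun _ : Fin s => A).filter (fun a => pat s a = d)) := by
      ext p
      simp only [mem_filter, mem_product]
      constructor
      · rintro ⟨⟨⟨h1, h2⟩, h3⟩, h4⟩
        exact ⟨⟨h1, h4⟩, ⟨h2, h3 ▸ h4⟩⟩
      · rintro ⟨⟨h1, h4⟩, ⟨h2, h5⟩⟩
        exact ⟨⟨⟨h1, h2⟩, by rw [h4, h5]⟩, h4⟩
    rw [this, Finset.card_product, fiber_card s A d hd0, sq]
  · intro p hp
    rw [mem_coe, mem_filter, mem_product] at hp
    rw [mem_coe, mem_image]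
    exact ⟨p.1, hp.1.1, rfl⟩


/-- If the number of tuples `(a₁,…,a_s,a₁',…,a_s') ∈ A^{2s}` with
`a₁-a₁' = ⋯ = a_s-a_s'` is at most `(t+η)|A|^s`, then `|A| ≤ 2(t²/(1-η))^{1/s} N^{1-1/s}`. -/
theorem stmt_6 (s t : ℕ) (hs : 2 ≤ s) (hst : s ≤ t) (η : ℝ) (hη : η ∈ Set.Ioo (0:ℝ) 1)
    (N : ℕ) (hN : 1 ≤ N) (A : Finset ℤ) (hA : A ⊆ Finset.Icc 1 (N : ℤ))
    (hE : ((((Fintype.piFinset fun _ : Fin s => A) ×ˢ (Fintype.piFinset fun _ : Fin s => A)).filter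
        (fun p => ∀ i, p.1 i - p.2 i = p.1 ⟨0, by omega⟩ - p.2 ⟨0, by omega⟩)).card : ℝ)
      ≤ ((t : ℝ) + η) * (A.card : ℝ) ^ s) :
    (A.card : ℝ) ≤ 2 * ((t : ℝ) ^ 2 / (1 - η)) ^ ((1 : ℝ) / s) * (N : ℝ) ^ (1 - (1 : ℝ) / s) := by
  haveI : NeZero s := ⟨by omega⟩
  obtain ⟨hη0, hη1⟩ := hη
  set Tup := Fintype.piFinset fun _ : Fin s => A with hTup
  set D := Tup.image (pat s) with hD
  -- rewrite hE in terms of the pattern-energy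
  have h0 : (⟨0, by omega⟩ : Fin s) = 0 := by ext; simp
  have hsetcongr : ((Tup ×ˢ Tup).filter
        (fun p => ∀ i, p.1 i - p.2 i = p.1 ⟨0, by omega⟩ - p.2 ⟨0, by omega⟩))
      = ((Tup ×ˢ Tup).filter (fun p => pat s p.1 = pat s p.2)) := by
    apply Finset.filter_congr
    intro p _
    rw [h0]
    simp only [pat, funext_iff]
    constructor
    · intro h i; have := h i; omega
    · intro h i; have := h i; omega
  have hE2 : ((∑ d ∈ D, (Qc s A d) ^ 2 : ℕ) : ℝ) ≤ ((t : ℝ) + η) * (A.card : ℝ) ^ s := by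
    rw [← energy_count s A]
    rw [hsetcongr] at hE
    exact hE
  -- good/bad split
  set g := ∑ d ∈ D.filter (fun d => Qc s A d ≤ t), Qc s A d with hg
  set b := ∑ d ∈ D.filter (fun d => ¬ Qc s A d ≤ t), Qc s A d with hb
  have hTupcard : Tup.card = A.card ^ s := by
    rw [hTup, Fintype.card_piFinset]
    simp
  have hgb : g + b = A.card ^ s := by
    rw [hg, hb, Finset.sum_filter_add_sum_filter_not, ← hTupcard]
    rw [Finset.card_eq_sum_card_fiberwise (f := pat s) (t := D)]
    · apply Finset.sum_congr rfl
      intro d hd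
      refine (fiber_card s A d ?_).symm
      rw [hD, mem_image] at hd
      obtain ⟨a, _, rfl⟩ := hd
      simp [pat]
    · intro a ha
      rw [hD, mem_coe, mem_image]
      exact ⟨a, ha, rfl⟩
  have hkey : g + (t + 1) * b ≤ ∑ d ∈ D, (Qc s A d) ^ 2 := by
    rw [← Finset.sum_filter_add_sum_filter_not D (fun d => Qc s A d ≤ t) (fun d => (Qc s A d)^2)]
    gcongr ?_ + ?_
    · apply Finset.sum_le_sum
      intro d _
      exact Nat.le_self_pow (by norm_num) _
    · rw [Finset.mul_sum]
      apply Finset.sum_le_sum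
      intro d hd
      rw [mem_filter] at hd
      have : t + 1 ≤ Qc s A d := by omega
      calc (t+1) * Qc s A d ≤ Qc s A d * Qc s A d := Nat.mul_le_mul_right _ this
        _ = (Qc s A d)^2 := (sq _).symm
  -- real inequality: (1-η) * |A|^s ≤ t * g
  have hmain : (1 - η) * ((A.card : ℝ) ^ s) ≤ (t : ℝ) * g := by
    have hgbR' : ((g:ℝ) + b) = (A.card : ℝ) ^ s := by exact_mod_cast hgb
    have h1 : ((g : ℝ) + ((t:ℝ) + 1) * b) ≤ ((t : ℝ) + η) * ((g:ℝ) + b) := by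
      have hc : ((g:ℝ) + ((t:ℝ)+1) * b) ≤ ((∑ d ∈ D, (Qc s A d) ^ 2 : ℕ) : ℝ) := by
        exact_mod_cast hkey
      rw [hgbR']
      linarith [hE2]
    have hgbR : ((g:ℝ) + b) = (A.card : ℝ) ^ s := by exact_mod_cast hgb
    have hbnn : (0:ℝ) ≤ b := Nat.cast_nonneg _
    have hgnn : (0:ℝ) ≤ g := Nat.cast_nonneg _
    have htR : (1:ℝ) ≤ t := by exact_mod_cast le_trans (le_trans one_le_two hs) hst
    nlinarith [h1]
  -- the solutions set
  set Good := Tup.filter (fun a => Qc s A (pat s a) ≤ t) with hGood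
  have hGoodcard : Good.card = g := filter_count s A (fun d => Qc s A d ≤ t)
  set Sol := Good ×ˢ (Finset.Icc ((N:ℤ)+1) (2*N)) with hSol
  have hSolcard : Sol.card = g * N := by
    rw [hSol, Finset.card_product, hGoodcard, Int.card_Icc]
    congr 1
    omega
  -- upper bound on Sol.card
  have hAmem : ∀ x ∈ A, 1 ≤ x ∧ x ≤ (N:ℤ) := by
    intro x hx
    have := hA hx
    rw [Finset.mem_Icc] at this
    exact this
  have hupper : Sol.card ≤ t * (2*N)^s := by
    classical
    set φ : (Fin s → ℤ) × ℤ → (Fin s → ℤ) := fun p i => p.2 - p.1 i with hφ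
    have := Finset.card_le_mul_card_image (f := φ) Sol t ?_
    · refine le_trans this ?_
      have himg : Sol.image φ ⊆ Fintype.piFinset (fun _ : Fin s => Finset.Icc (1:ℤ) (2*N)) := by
        intro n hn
        rw [mem_image] at hn
        obtain ⟨p, hp, rfl⟩ := hn
        rw [hSol, mem_product, hGood, mem_filter] at hp
        obtain ⟨⟨hp1, _⟩, hp2⟩ := hp
        rw [Fintype.mem_piFinset] at hp1
        rw [Fintype.mem_piFinset]
        intro i
        have hai := hAmem _ (hp1 i)
        rw [Finset.mem_Icc] at hp2 ⊢
        simp only [hφ]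
        omega
      have : (Sol.image φ).card ≤ (2*N)^s := by
        refine le_trans (Finset.card_le_card himg) ?_
        rw [Fintype.card_piFinset]
        simp only [Int.card_Icc]
        rw [Finset.prod_const, Finset.card_univ, Fintype.card_fin]
        apply Nat.pow_le_pow_left
        omega
      exact Nat.mul_le_mul_left t this
    · -- each fiber has at most t elements
      intro n hn
      rw [mem_image] at hn
      obtain ⟨p0, hp0, hp0n⟩ := hn
      rw [hSol, mem_product, hGood, mem_filter] at hp0
      obtain ⟨⟨hp01, hp0good⟩, hp02⟩ := hp0
      set d := pat s p0.1 with hd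
      have hdn : ∀ i, d i = n 0 - n i := by
        intro i
        rw [hd]
        have h1 : n i = p0.2 - p0.1 i := by rw [← hp0n]
        have h2 : n 0 = p0.2 - p0.1 0 := by rw [← hp0n]
        simp only [pat]
        omega
      refine le_trans ?_ hp0good
      rw [show Qc s A d = (A.filter fun x => ∀ i, x + d i ∈ A).card from rfl]
      apply Finset.card_le_card_of_injOn (fun p => p.1 0)
      · intro p hp
        rw [mem_coe, mem_filter] at hp
        obtain ⟨hpSol, hpn⟩ := hp
        rw [hSol, mem_product, hGood, mem_filter] at hpSol
        obtain ⟨⟨hp1, _⟩, _⟩ := hpSol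
        rw [Fintype.mem_piFinset] at hp1
        rw [mem_coe, mem_filter]
        refine ⟨hp1 0, fun i => ?_⟩
        have h1 : n i = p.2 - p.1 i := by rw [← hpn]
        have h2 : n 0 = p.2 - p.1 0 := by rw [← hpn]
        have : p.1 0 + d i = p.1 i := by rw [hdn i]; omega
        rw [this]
        exact hp1 i
      · intro p hp q hq hpq
        simp only [Finset.coe_filter, Set.mem_setOf_eq] at hp hq
        obtain ⟨_, hpn⟩ := hp
        obtain ⟨_, hqn⟩ := hq
        simp only at hpq
        have hp2 : p.2 = n 0 + p.1 0 := by
          have : n 0 = p.2 - p.1 0 := by rw [← hpn]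
          omega
        have hq2 : q.2 = n 0 + q.1 0 := by
          have : n 0 = q.2 - q.1 0 := by rw [← hqn]
          omega
        have h2 : p.2 = q.2 := by rw [hp2, hq2, hpq]
        have h1 : p.1 = q.1 := by
          funext i
          have ha : n i = p.2 - p.1 i := by rw [← hpn]
          have hb : n i = q.2 - q.1 i := by rw [← hqn]
          omega
        exact Prod.ext h1 h2
  -- combine
  have hNρ : (0:ℝ) < N := by exact_mod_cast hN
  have htpos : (0:ℝ) < t := by
    have : 1 ≤ t := le_trans (le_trans one_le_two hs) hst
    exact_mod_cast this
  have hpow : ((A.card : ℝ)) ^ s ≤ 2^s * ((t:ℝ)^2 / (1-η)) * (N:ℝ)^(s-1) := by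
    have hup : ((g:ℝ) * N) ≤ (t:ℝ) * (2*N)^s := by
      have := hSolcard ▸ hupper
      exact_mod_cast this
    have h1 : (1 - η) * ((A.card : ℝ) ^ s) * N ≤ (t:ℝ)^2 * (2*N)^s := by
      calc (1 - η) * ((A.card : ℝ) ^ s) * N ≤ ((t:ℝ) * g) * N := by
            apply mul_le_mul_of_nonneg_right hmain (le_of_lt hNρ)
        _ = (t:ℝ) * ((g:ℝ) * N) := by ring
        _ ≤ (t:ℝ) * ((t:ℝ) * (2*N)^s) := by
            apply mul_le_mul_of_nonneg_left hup (le_of_lt htpos)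
        _ = (t:ℝ)^2 * (2*N)^s := by ring
    have hNs : ((2:ℝ)*N)^s = 2^s * (N:ℝ)^(s-1) * N := by
      have hNp : (N:ℝ)^s = (N:ℝ)^(s-1) * N := by
        rw [← pow_succ]
        congr 1
        omega
      rw [mul_pow, hNp]
      ring
    rw [hNs] at h1
    have h2 : (1 - η) * ((A.card : ℝ) ^ s) ≤ (t:ℝ)^2 * (2^s * (N:ℝ)^(s-1)) := by
      have := mul_le_mul_of_nonneg_right h1 (le_of_lt (inv_pos.mpr hNρ))
      calc (1 - η) * ((A.card : ℝ) ^ s)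
          = (1 - η) * ((A.card : ℝ) ^ s) * N * (N:ℝ)⁻¹ := by
            field_simp
        _ ≤ (t:ℝ)^2 * (2^s * (N:ℝ)^(s-1) * N) * (N:ℝ)⁻¹ := this
        _ = (t:ℝ)^2 * (2^s * (N:ℝ)^(s-1)) := by field_simp
    have h1η : (0:ℝ) < 1 - η := by linarith
    calc ((A.card : ℝ)) ^ s = ((1-η) * ((A.card : ℝ) ^ s)) / (1-η) := by field_simp
      _ ≤ ((t:ℝ)^2 * (2^s * (N:ℝ)^(s-1))) / (1-η) := by
          gcongr
      _ = 2^s * ((t:ℝ)^2 / (1-η)) * (N:ℝ)^(s-1) := by field_simp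
  -- take s-th roots
  have h1η : (0:ℝ) < 1 - η := by linarith
  have hsne : (s:ℝ) ≠ 0 := by positivity
  have hXnn : (0:ℝ) ≤ (A.card : ℝ) := Nat.cast_nonneg _
  have hsinv : (0:ℝ) ≤ (1:ℝ)/s := by positivity
  have hroot := Real.rpow_le_rpow (by positivity) hpow hsinv
  have hL : (((A.card : ℝ)) ^ s) ^ ((1:ℝ)/s) = (A.card : ℝ) := by
    rw [← Real.rpow_natCast (A.card : ℝ) s, ← Real.rpow_mul hXnn]
    rw [mul_one_div, div_self hsne, Real.rpow_one]
  have hR : ((2:ℝ)^s * ((t:ℝ)^2 / (1-η)) * (N:ℝ)^(s-1)) ^ ((1:ℝ)/s)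
      = 2 * ((t : ℝ) ^ 2 / (1 - η)) ^ ((1 : ℝ) / s) * (N : ℝ) ^ (1 - (1 : ℝ) / s) := by
    have h2nn : (0:ℝ) ≤ (2:ℝ)^s := by positivity
    have htnn : (0:ℝ) ≤ (t:ℝ)^2 / (1-η) := by positivity
    have hNnn : (0:ℝ) ≤ (N:ℝ)^(s-1) := by positivity
    rw [Real.mul_rpow (by positivity) hNnn, Real.mul_rpow h2nn htnn]
    congr 1
    · congr 1
      rw [← Real.rpow_natCast (2:ℝ) s, ← Real.rpow_mul (by norm_num)]
      rw [mul_one_div, div_self hsne, Real.rpow_one]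
    · rw [← Real.rpow_natCast (N:ℝ) (s-1), ← Real.rpow_mul (Nat.cast_nonneg _)]
      congr 1
      have : ((s-1 : ℕ) : ℝ) = (s:ℝ) - 1 := by
        have : 1 ≤ s := by omega
        push_cast [this]
        ring
      rw [this]
      field_simp
  rw [hL, hR] at hroot
  exact hroot
end

section
/- Let $2 \leq s \leq t$ and suppose that for every prime power $q$ and every $n$, the following removal-type counting holds with constant $C > 0$: every $A_0 \subseteq \mathbb{F}_q^n$ of density $\rho = |A_0|/q^n$ contains at least $(\rho/2k)^{C} (q^n)^{k-1}$ solutions to $a_1x_1 + \cdots + a_kx_k = 0$ (for fixed $a_i \in \mathbb{F}_q^\times$ with $\sum a_i = 0$, $k \geq 3$). Then for any function $f : \mathbb{F}_q^n \to [0,\infty)$ with $\sum_x f(x) \geq \delta q^n$ and $\sum_x f(x)^s \leq K q^n$ (where $\delta \in (0,1]$, $K \geq 1$), one has $\sum_{a_1x_1+\cdots+a_kx_k=0} \prod_{j=1}^k f(x_j) \geq c(k,s,K,q) \, \delta^{\,k + \frac{s}{s-1}C} (q^n)^{k-1}$ for some constant $c(k,s,K,q) > 0$. -/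
/-- Weighted supersaturation from a set-level removal-type counting input.
If every `A₀ ⊆ 𝔽_q^n` of density `ρ` contains at least `(ρ/2k)^C (q^n)^{k-1}` solutions to
`a₁x₁ + ⋯ + a_kx_k = 0`, then there is `c = c(k,s,K,q) > 0` such that every `f ≥ 0` with
`∑ f ≥ δ q^n` and `∑ f^s ≤ K q^n` satisfies
`∑_{a₁x₁+⋯+a_kx_k=0} ∏ f(xⱼ) ≥ c δ^{k + sC/(s-1)} (q^n)^{k-1}`. -/
theorem stmt_19 (F : Type*) [Field F] [Fintype F] [DecidableEq F]
    (s t k : ℕ) (hs : 2 ≤ s) (hst : s ≤ t) (hk : 3 ≤ k)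
    (C : ℝ) (hC : 0 < C) (K : ℝ) (hK : 1 ≤ K)
    (hcount : ∀ (n : ℕ) (a : Fin k → F), (∀ i, a i ≠ 0) → (∑ i, a i = 0) →
      ∀ A₀ : Finset (Fin n → F),
        ((A₀.card : ℝ) / (Fintype.card F : ℝ) ^ n / (2 * k)) ^ C *
            ((Fintype.card F : ℝ) ^ n) ^ (k - 1)
          ≤ (((Fintype.piFinset fun _ : Fin k => A₀).filter
              (fun x : Fin k → (Fin n → F) => ∑ i, a i • x i = 0)).card : ℝ)) :
    ∃ c : ℝ, 0 < c ∧
      ∀ (n : ℕ) (a : Fin k → F), (∀ i, a i ≠ 0) → (∑ i, a i = 0) →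
        ∀ (δ : ℝ), δ ∈ Set.Ioc (0:ℝ) 1 →
          ∀ f : (Fin n → F) → ℝ, (∀ x, 0 ≤ f x) →
            δ * (Fintype.card F : ℝ) ^ n ≤ ∑ x, f x →
            (∑ x, f x ^ s) ≤ K * (Fintype.card F : ℝ) ^ n →
            c * δ ^ ((k : ℝ) + (s : ℝ) / ((s : ℝ) - 1) * C) *
                ((Fintype.card F : ℝ) ^ n) ^ (k - 1)
              ≤ ∑ x ∈ Finset.univ.filter
                  (fun x : Fin k → (Fin n → F) => ∑ i, a i • x i = 0),
                  ∏ j, f (x j) := by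
  classical
  have hs2 : (2:ℝ) ≤ (s:ℝ) := by exact_mod_cast hs
  have hs1pos : (0:ℝ) < (s:ℝ) - 1 := by linarith
  have hKpos : (0:ℝ) < K := by linarith
  have hkR : (0:ℝ) < (k:ℝ) := by exact_mod_cast (show 0 < k by omega)
  have h2k : (0:ℝ) < 2 * (k:ℝ) := by linarith
  set u : ℝ := 1 / ((s:ℝ) - 1) with hu
  have hupos : 0 < u := by positivity
  set c' : ℝ := (1/4) * ((4*K) ^ u)⁻¹ with hc'
  have h4Ku : (0:ℝ) < (4*K) ^ u := Real.rpow_pos_of_pos (by linarith) u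
  have hc'pos : 0 < c' := by positivity
  refine ⟨(1/2:ℝ)^k * (c' / (2*k)) ^ C, by positivity, ?_⟩
  intro n a ha hsa δ hδ f hf hfsum hfs
  obtain ⟨hδ0, hδ1⟩ := hδ
  have hcF : 0 < Fintype.card F := Fintype.card_pos
  set Q : ℝ := (Fintype.card F : ℝ) ^ n with hQdef
  have hQ : 0 < Q := by positivity
  set M : ℝ := (4*K/δ) ^ u with hM
  have hMpos : 0 < M := Real.rpow_pos_of_pos (by positivity) u
  set B : Finset (Fin n → F) :=
    Finset.univ.filter (fun x => δ/2 ≤ f x ∧ f x ≤ M) with hB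
  -- M ^ (s-1) = 4K/δ
  have hMs : M ^ (s-1) = 4*K/δ := by
    have hcast : ((s-1 : ℕ) : ℝ) = (s:ℝ) - 1 := by
      have h1 : 1 ≤ s := by omega
      push_cast [h1]; ring
    have hmul : u * ((s:ℝ) - 1) = 1 := by
      rw [hu]; field_simp
    rw [← Real.rpow_natCast M (s-1), hcast, hM,
      ← Real.rpow_mul (by positivity), hmul, Real.rpow_one]
  -- pointwise bound
  have hpt : ∀ x, f x ≤ (if x ∈ B then f x else 0) + δ/2 + f x ^ s * (δ/(4*K)) := by
    intro x
    by_cases hxB : x ∈ B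
    · have h0 : 0 ≤ f x ^ s * (δ/(4*K)) :=
        mul_nonneg (pow_nonneg (hf x) s) (by positivity)
      simp only [hxB, if_true]; linarith
    · simp only [hxB, if_false]
      simp only [hB, Finset.mem_filter, Finset.mem_univ, true_and, not_and_or,
        not_le] at hxB
      rcases hxB with h | h
      · have h0 : 0 ≤ f x ^ s * (δ/(4*K)) :=
          mul_nonneg (pow_nonneg (hf x) s) (by positivity)
        linarith
      · have hfx : 0 < f x := lt_trans hMpos h
        have h1 : f x * (4*K/δ) ≤ f x ^ s := by
          calc f x * (4*K/δ) = f x * M ^ (s-1) := by rw [hMs]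
            _ ≤ f x * f x ^ (s-1) := by
                apply mul_le_mul_of_nonneg_left
                  (pow_le_pow_left₀ hMpos.le h.le _) hfx.le
            _ = f x ^ s := by
                rw [← pow_succ']
                congr 1
                omega
        have h2 : f x ≤ f x ^ s * (δ/(4*K)) := by
          have h3 := mul_le_mul_of_nonneg_right h1
            (le_of_lt (show (0:ℝ) < δ/(4*K) by positivity))
          calc f x = f x * (4*K/δ) * (δ/(4*K)) := by field_simp
            _ ≤ f x ^ s * (δ/(4*K)) := h3
        linarith
  -- sum over B is large
  have hcardQ : (Fintype.card (Fin n → F) : ℝ) = Q := by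
    rw [hQdef]
    simp [Fintype.card_pi]
  have hsumB : δ/4 * Q ≤ ∑ x ∈ B, f x := by
    have e0 : ∑ x : Fin n → F, (if x ∈ B then f x else 0) = ∑ x ∈ B, f x := by
      rw [Finset.sum_ite_mem, Finset.univ_inter]
    have e1 : ∑ _x : Fin n → F, (δ/2 : ℝ) = δ/2 * Q := by
      rw [Finset.sum_const, Finset.card_univ, nsmul_eq_mul, hcardQ]; ring
    have h1 : ∑ x, f x ≤ (∑ x ∈ B, f x) + δ/2 * Q + (∑ x, f x ^ s) * (δ/(4*K)) := by
      calc ∑ x, f x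
          ≤ ∑ x, ((if x ∈ B then f x else 0) + δ/2 + f x ^ s * (δ/(4*K))) :=
            Finset.sum_le_sum fun x _ => hpt x
        _ = (∑ x ∈ B, f x) + δ/2 * Q + (∑ x, f x ^ s) * (δ/(4*K)) := by
            rw [Finset.sum_add_distrib, Finset.sum_add_distrib, e0, e1,
              ← Finset.sum_mul]
    have h2 : (∑ x, f x ^ s) * (δ/(4*K)) ≤ δ/4 * Q := by
      have h3 : (∑ x, f x ^ s) * (δ/(4*K)) ≤ (K * Q) * (δ/(4*K)) :=
        mul_le_mul_of_nonneg_right hfs (by positivity)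
      have h4 : (K * Q) * (δ/(4*K)) = δ/4 * Q := by field_simp
      linarith
    linarith [hfsum]
  -- card of B is large
  have hcardB : δ/(4*M) * Q ≤ (B.card : ℝ) := by
    have h1 : ∑ x ∈ B, f x ≤ (B.card:ℝ) * M := by
      have h := Finset.sum_le_card_nsmul B f M
        (fun x hx => ((Finset.mem_filter.mp hx).2).2)
      simpa [nsmul_eq_mul] using h
    have h5 : δ/(4*M) * Q = (δ/4*Q)/M := by
      field_simp
    rw [h5, div_le_iff₀ hMpos]
    exact le_trans hsumB h1
  -- density lower bound
  set r : ℝ := c' * δ ^ ((s:ℝ)/((s:ℝ)-1)) with hrdef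
  have hδa : (0:ℝ) < δ ^ ((s:ℝ)/((s:ℝ)-1)) := Real.rpow_pos_of_pos hδ0 _
  have hrpos : 0 < r := mul_pos hc'pos hδa
  have hMδ : M * δ ^ u = (4*K) ^ u := by
    rw [hM, ← Real.mul_rpow (by positivity) hδ0.le, div_mul_cancel₀]
    exact ne_of_gt hδ0
  have hexp : (s:ℝ)/((s:ℝ)-1) = 1 + u := by
    rw [hu]; field_simp; ring
  have hδu : (0:ℝ) < δ ^ u := Real.rpow_pos_of_pos hδ0 _
  have hr_eq : r = δ/(4*M) := by
    rw [hrdef, hexp, Real.rpow_add hδ0, Real.rpow_one, hc',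
      eq_div_iff (show (4*M:ℝ) ≠ 0 by positivity)]
    rw [show 1/4 * ((4*K)^u)⁻¹ * (δ * δ ^ u) * (4*M)
        = δ * (M * δ ^ u) * ((4*K)^u)⁻¹ from by ring, hMδ,
      mul_inv_cancel_right₀ (ne_of_gt h4Ku)]
  have hρ : r ≤ (B.card:ℝ)/Q := by
    rw [hr_eq, le_div_iff₀ hQ]
    exact hcardB
  -- apply set-level count to B
  have hN := hcount n a ha hsa B
  have hmono : (r/(2*(k:ℝ))) ^ C ≤ ((B.card:ℝ)/Q/(2*(k:ℝ))) ^ C :=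
    Real.rpow_le_rpow (by positivity) ((div_le_div_iff_of_pos_right h2k).mpr hρ) hC.le
  -- sum over solutions in B^k
  set P := (Finset.univ.filter
    (fun x : Fin k → (Fin n → F) => ∑ i, a i • x i = 0)) with hP
  set T := ((Fintype.piFinset fun _ : Fin k => B).filter
    (fun x : Fin k → (Fin n → F) => ∑ i, a i • x i = 0)) with hT
  have hTsub : T ⊆ P := Finset.filter_subset_filter _ (Finset.subset_univ _)
  have hlow : (T.card : ℝ) * (δ/2)^k ≤ ∑ x ∈ T, ∏ j, f (x j) := by
    have h := Finset.card_nsmul_le_sum T (fun x => ∏ j, f (x j)) ((δ/2)^k) ?_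
    · simpa [nsmul_eq_mul] using h
    · intro x hx
      have hxB : ∀ i, x i ∈ B :=
        fun i => (Fintype.mem_piFinset.mp (Finset.mem_filter.mp hx).1) i
      calc (δ/2)^k = ∏ _j : Fin k, (δ/2 : ℝ) := by rw [Finset.prod_const, Finset.card_univ, Fintype.card_fin]
        _ ≤ ∏ j, f (x j) := Finset.prod_le_prod (fun _ _ => by positivity)
            (fun j _ => ((Finset.mem_filter.mp (hxB j)).2).1)
  have hsub : ∑ x ∈ T, ∏ j, f (x j) ≤ ∑ x ∈ P, ∏ j, f (x j) :=
    Finset.sum_le_sum_of_subset_of_nonneg hTsub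
      (fun x _ _ => Finset.prod_nonneg fun j _ => hf _)
  -- final arithmetic
  have hkey : (1/2:ℝ)^k * (c'/(2*(k:ℝ)))^C * δ ^ ((k:ℝ) + (s:ℝ)/((s:ℝ)-1) * C)
      = (δ/2)^k * (r/(2*(k:ℝ)))^C := by
    have e1 : (r/(2*(k:ℝ)))^C = (c'/(2*(k:ℝ)))^C * δ ^ ((s:ℝ)/((s:ℝ)-1) * C) := by
      rw [hrdef, show c' * δ ^ ((s:ℝ)/((s:ℝ)-1)) / (2*(k:ℝ))
          = c'/(2*(k:ℝ)) * δ ^ ((s:ℝ)/((s:ℝ)-1)) from by ring,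
        Real.mul_rpow (by positivity) hδa.le,
        ← Real.rpow_mul hδ0.le]
    rw [Real.rpow_add hδ0, Real.rpow_natCast, e1, div_pow δ]
    simp only [one_div, inv_pow]
    ring
  calc (1/2:ℝ)^k * (c'/(2*(k:ℝ)))^C * δ ^ ((k:ℝ) + (s:ℝ)/((s:ℝ)-1) * C) * Q ^ (k-1)
      = (δ/2)^k * ((r/(2*(k:ℝ)))^C * Q ^ (k-1)) := by rw [hkey]; ring
    _ ≤ (δ/2)^k * (((B.card:ℝ)/Q/(2*(k:ℝ)))^C * Q ^ (k-1)) := by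
        apply mul_le_mul_of_nonneg_left _ (by positivity)
        exact mul_le_mul_of_nonneg_right hmono (by positivity)
    _ ≤ (δ/2)^k * (T.card : ℝ) :=
        mul_le_mul_of_nonneg_left hN (by positivity)
    _ = (T.card : ℝ) * (δ/2)^k := by ring
    _ ≤ ∑ x ∈ T, ∏ j, f (x j) := hlow
    _ ≤ ∑ x ∈ P, ∏ j, f (x j) := hsub
end
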